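/- Let q_e : [0, ∞) → ℝ^K be continuous and periodic with period τ > 0, and ψ : ℝ^K → ℝ_+ continuous. Suppose q : [0, ∞) → ℝ^K is continuous and there exist times 0 = v_0 < v_1 < v_2 < … with v_m → ∞ such that sup_{t∈[0,T]} ‖q(v_{m−1}+t) − q_e(t)‖ → 0 for all T > 0 and v_m − v_{m−1} → τ as m → ∞. Then (1/t)∫_0^t ψ(q(u)) du → (1/τ)∫_0^τ ψ(q_e(u)) du as t → ∞. -/

import Mathlib

/-!
Split `∫₀ᵗ ψ(q)` at the cycle times `v m`. After the shift `u = v m + t`, the integral over the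
`m`-th cycle is the integral of `ψ(q(v m + ·))` over `[0, v (m+1) - v m]`; uniform convergence
of the integrands and of the cycle lengths makes it converge to `c = ∫₀^τ ψ(q_e)`. By Cesàro,
the integral up to `v n` and `v n` itself grow like `n c` and `n τ`, so the averages along the
cycle times converge to `c / τ`. Since `ψ ≥ 0` the integral is monotone in `t`, which squeezes
the average at a time `t ∈ [v k, v (k+1)]` between those at consecutive cycle times, whose
ratio tends to `1`.
-/

open Filter Metric Set Topology MeasureTheory

theorem Continuous.comp_tendstoUniformlyOn_of_isCompact {α ι X Y : Type*} [PseudoMetricSpace X]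
    [ProperSpace X] [UniformSpace Y] {p : Filter ι} {F : ι → α → X} {f : α → X} {s : Set α}
    {ψ : X → Y} (hψ : Continuous ψ) (hfs : IsCompact (f '' s)) (h : TendstoUniformlyOn F f p s) :
    TendstoUniformlyOn (fun i x => ψ (F i x)) (fun x => ψ (f x)) p s := by
  have hK : IsCompact (cthickening 1 (f '' s)) := hfs.cthickening
  refine UniformContinuousOn.comp_tendstoUniformlyOn_eventually ?_
    (fun x hx => self_subset_cthickening _ (mem_image_of_mem f hx))
    (hK.uniformContinuousOn_of_continuous hψ.continuousOn) h
  filter_upwards [Metric.tendstoUniformlyOn_iff.1 h 1 one_pos] with i hi x hx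
  exact mem_cthickening_of_dist_le _ (f x) _ _ (mem_image_of_mem f hx)
    (by rw [dist_comm]; exact (hi x hx).le)

theorem tendsto_intervalIntegral_of_tendstoUniformlyOn {ι E : Type*} [NormedAddCommGroup E]
    [NormedSpace ℝ E] {l : Filter ι} {g : ι → ℝ → E} {G : ℝ → E} {d : ι → ℝ} {τ T : ℝ}
    (hτ : 0 < τ) (hτT : τ < T) (hg : ∀ i, IntervalIntegrable (g i) volume 0 (d i))
    (hG : Continuous G) (hgG : TendstoUniformlyOn g G l (Icc 0 T))
    (hd : Tendsto d l (𝓝 τ)) :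
    Tendsto (fun i => ∫ t in 0..d i, g i t) l (𝓝 (∫ t in 0..τ, G t)) := by
  have hGint : ∀ a b, IntervalIntegrable G volume a b := fun a b => hG.intervalIntegrable a b
  have hmain : Tendsto (fun i => ∫ t in 0..d i, G t) l (𝓝 (∫ t in 0..τ, G t)) :=
    ((intervalIntegral.continuous_primitive hGint 0).tendsto τ).comp hd
  have herror : Tendsto (fun i => ∫ t in 0..d i, (g i t - G t)) l (𝓝 0) := by
    rw [NormedAddGroup.tendsto_nhds_zero]
    intro ε hε
    have hT : 0 < T := hτ.trans hτT
    filter_upwards [hd.eventually (eventually_gt_nhds hτ), hd.eventually (eventually_lt_nhds hτT),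
      Metric.tendstoUniformlyOn_iff.1 hgG (ε / (2 * T)) (by positivity)] with i hpos hle hclose
    have hbound : ∀ t ∈ uIoc 0 (d i), ‖g i t - G t‖ ≤ ε / (2 * T) := by
      intro t ht
      rw [uIoc_of_le hpos.le] at ht
      rw [← dist_eq_norm, dist_comm]
      exact (hclose t ⟨ht.1.le, ht.2.trans hle.le⟩).le
    calc ‖∫ t in 0..d i, (g i t - G t)‖ ≤ ε / (2 * T) * |d i - 0| :=
          intervalIntegral.norm_integral_le_of_norm_le_const hbound
      _ ≤ ε / (2 * T) * T := by
          rw [sub_zero, abs_of_pos hpos]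
          gcongr
      _ = ε / 2 := by field_simp
      _ < ε := half_lt_self hε
  rw [← add_zero (∫ t in 0..τ, G t)]
  refine (hmain.add herror).congr fun i => ?_
  rw [← intervalIntegral.integral_add (hGint _ _) ((hg i).sub (hGint _ _))]
  simp only [add_sub_cancel]

theorem tendsto_div_natCast_of_tendsto_sub {a : ℕ → ℝ} {α : ℝ}
    (h : Tendsto (fun n => a (n + 1) - a n) atTop (𝓝 α)) :
    Tendsto (fun n => a n / n) atTop (𝓝 α) := by
  have hsum := h.cesaro
  simp only [Finset.sum_range_sub] at hsum
  have h0 : Tendsto (fun n : ℕ => a 0 / n) atTop (𝓝 0) := tendsto_const_div_atTop_nhds_zero_nat _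
  rw [← add_zero α]
  refine (hsum.add h0).congr fun n => ?_
  ring

theorem tendsto_div_of_tendsto_sub {a b : ℕ → ℝ} {α β : ℝ}
    (ha : Tendsto (fun n => a (n + 1) - a n) atTop (𝓝 α))
    (hb : Tendsto (fun n => b (n + 1) - b n) atTop (𝓝 β)) (hβ : β ≠ 0) :
    Tendsto (fun n => a n / b n) atTop (𝓝 (α / β)) := by
  refine ((tendsto_div_natCast_of_tendsto_sub ha).div (tendsto_div_natCast_of_tendsto_sub hb)
    hβ).congr' ?_
  filter_upwards [eventually_ne_atTop 0] with n hn
  exact div_div_div_cancel_right₀ (Nat.cast_ne_zero.2 hn) _ _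

theorem tendsto_succ_div_self_of_tendsto_sub {v : ℕ → ℝ} {τ : ℝ}
    (hgap : Tendsto (fun n => v (n + 1) - v n) atTop (𝓝 τ)) (hv : Tendsto v atTop atTop) :
    Tendsto (fun n => v (n + 1) / v n) atTop (𝓝 1) := by
  have h := (tendsto_const_nhds (x := (1 : ℝ))).add (hgap.div_atTop hv)
  rw [add_zero] at h
  refine h.congr' ?_
  filter_upwards [hv.eventually_ne_atTop 0] with n hn
  field_simp
  ring

theorem Monotone.tendsto_div_of_tendsto_div_comp {F : ℝ → ℝ} {v : ℕ → ℝ} {L : ℝ}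
    (hF : Monotone F) (hF0 : 0 ≤ F 0) (hv : Monotone v) (hvtop : Tendsto v atTop atTop)
    (hratio : Tendsto (fun n => v (n + 1) / v n) atTop (𝓝 1))
    (hFv : Tendsto (fun n => F (v n) / v n) atTop (𝓝 L)) :
    Tendsto (fun t => F t / t) atTop (𝓝 L) := by
  have hvpos : ∀ᶠ n in atTop, 0 < v n := hvtop.eventually_gt_atTop 0
  have hupper : Tendsto (fun n => F (v (n + 1)) / v n) atTop (𝓝 L) := by
    have h := (hFv.comp (tendsto_add_atTop_nat 1)).mul hratio
    rw [mul_one] at h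
    refine h.congr' ?_
    filter_upwards [(tendsto_add_atTop_nat 1).eventually hvpos] with n hn
    exact div_mul_div_cancel₀ hn.ne'
  have hlower : Tendsto (fun n => F (v n) / v (n + 1)) atTop (𝓝 L) := by
    have hinv : Tendsto (fun n => v n / v (n + 1)) atTop (𝓝 1) := by
      simpa only [inv_div, inv_one] using hratio.inv₀ one_ne_zero
    have h := hFv.mul hinv
    rw [mul_one] at h
    refine h.congr' ?_
    filter_upwards [hvpos] with n hn
    exact div_mul_div_cancel₀ hn.ne'
  -- `k t` is the first index with `t < v (k t + 1)`, so that `v (k t) ≤ t` once `k t > 0`.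
  have hex : ∀ t, ∃ n, t < v (n + 1) := fun t =>
    ((hvtop.comp (tendsto_add_atTop_nat 1)).eventually_gt_atTop t).exists
  set k : ℝ → ℕ := fun t => Nat.find (hex t)
  have hk_top : Tendsto k atTop atTop := by
    refine tendsto_atTop.2 fun N => (eventually_ge_atTop (v N)).mono fun t ht => ?_
    exact (Nat.le_find_iff _ _).2 fun m hm => not_lt.2 ((hv hm).trans ht)
  have hk_mem : ∀ t, 0 < k t → v (k t) ≤ t ∧ t ≤ v (k t + 1) := fun t hk =>
    ⟨not_lt.1 (Nat.sub_add_cancel hk ▸ Nat.find_min (hex t) (Nat.sub_lt hk one_pos)),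
      (Nat.find_spec (hex t)).le⟩
  have hsandwich : ∀ᶠ t in atTop,
      F (v (k t)) / v (k t + 1) ≤ F t / t ∧ F t / t ≤ F (v (k t + 1)) / v (k t) := by
    filter_upwards [hk_top.eventually hvpos, hk_top.eventually (eventually_gt_atTop 0)]
      with t hvk hk
    obtain ⟨hvk_le, hle_vk⟩ := hk_mem t hk
    have ht : 0 < t := hvk.trans_le hvk_le
    exact ⟨div_le_div₀ (hF0.trans (hF ht.le)) (hF hvk_le) ht hle_vk,
      div_le_div₀ (hF0.trans (hF (ht.le.trans hle_vk))) (hF hle_vk) hvk hvk_le⟩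
  exact tendsto_of_tendsto_of_tendsto_of_le_of_le' (hlower.comp hk_top) (hupper.comp hk_top)
    (hsandwich.mono fun _ h => h.1) (hsandwich.mono fun _ h => h.2)

theorem monotone_intervalIntegral_of_nonneg {f : ℝ → ℝ} (hf : Continuous f) (hf0 : ∀ x, 0 ≤ f x)
    (a : ℝ) : Monotone fun t => ∫ u in a..t, f u := by
  intro s t hst
  rw [← sub_nonneg, intervalIntegral.integral_interval_sub_left (hf.intervalIntegrable _ _)
    (hf.intervalIntegrable _ _)]
  exact intervalIntegral.integral_nonneg hst fun u _ => hf0 u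

theorem stmt13_general (K : ℕ) (τ : ℝ) (hτ : 0 < τ)
    (qe q : ℝ → (Fin K → ℝ)) (ψ : (Fin K → ℝ) → ℝ)
    (hqe_cont : Continuous qe) (hq_cont : Continuous q)
    (hψ_cont : Continuous ψ) (hψ_nonneg : ∀ x, 0 ≤ ψ x)
    (v : ℕ → ℝ) (hvmono : StrictMono v)
    (hvtop : Tendsto v atTop atTop)
    (hconv : ∀ T > 0, ∀ ε > 0, ∃ M : ℕ, ∀ m ≥ M, ∀ t ∈ Set.Icc (0:ℝ) T,
      ‖q (v m + t) - qe t‖ ≤ ε)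
    (hgap : Tendsto (fun m => v (m + 1) - v m) atTop (nhds τ)) :
    Tendsto (fun t => (1 / t) * ∫ u in (0:ℝ)..t, ψ (q u))
      atTop (nhds ((1 / τ) * ∫ u in (0:ℝ)..τ, ψ (qe u))) := by
  set F : ℝ → ℝ := fun t => ∫ u in (0:ℝ)..t, ψ (q u)
  have hf : Continuous fun u => ψ (q u) := hψ_cont.comp hq_cont
  have hunif : TendstoUniformlyOn (fun m t => q (v m + t)) qe atTop (Icc 0 (τ + 1)) := by
    refine Metric.tendstoUniformlyOn_iff.2 fun ε hε => ?_
    obtain ⟨M, hM⟩ := hconv (τ + 1) (by linarith) (ε / 2) (half_pos hε)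
    filter_upwards [eventually_ge_atTop M] with m hm t ht
    rw [dist_comm, dist_eq_norm]
    exact (hM m hm t ht).trans_lt (half_lt_self hε)
  have hcycle : Tendsto (fun m => F (v (m + 1)) - F (v m)) atTop
      (𝓝 (∫ u in (0:ℝ)..τ, ψ (qe u))) := by
    refine (tendsto_intervalIntegral_of_tendstoUniformlyOn hτ (lt_add_one τ)
      (fun m => Continuous.intervalIntegrable (by fun_prop) _ _)
      (hψ_cont.comp hqe_cont) (hψ_cont.comp_tendstoUniformlyOn_of_isCompact
        (isCompact_Icc.image hqe_cont) hunif) hgap).congr fun m => ?_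
    rw [intervalIntegral.integral_interval_sub_left (hf.intervalIntegrable _ _)
      (hf.intervalIntegrable _ _), intervalIntegral.integral_comp_add_left (fun u => ψ (q u))]
    simp only [add_zero, add_sub_cancel]
  have hF_mono : Monotone F := monotone_intervalIntegral_of_nonneg hf (fun _ => hψ_nonneg _) 0
  have hlim := hF_mono.tendsto_div_of_tendsto_div_comp (by simp [F]) hvmono.monotone hvtop (tendsto_succ_div_self_of_tendsto_sub hgap hvtop)
    (tendsto_div_of_tendsto_sub hcycle hgap hτ.ne')
  simpa only [one_div_mul_eq_div] using hlim

/-- Long-run average cost along a trajectory converging to a limit cycle: if the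
shifted trajectories q(v_m + ·) converge uniformly on compacts to the τ-periodic
limit cycle q_e, and the cycle times v_{m+1} − v_m converge to τ, then the
time-average of ψ(q(·)) converges to the average of ψ(q_e(·)) over one period. -/
theorem stmt13 (K : ℕ) (τ : ℝ) (hτ : 0 < τ)
    (qe q : ℝ → (Fin K → ℝ)) (ψ : (Fin K → ℝ) → ℝ)
    (hqe_cont : Continuous qe) (hq_cont : Continuous q)
    (hper : ∀ t : ℝ, 0 ≤ t → qe (t + τ) = qe t)
    (hψ_cont : Continuous ψ) (hψ_nonneg : ∀ x, 0 ≤ ψ x)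
    (v : ℕ → ℝ) (hv0 : v 0 = 0) (hvmono : StrictMono v)
    (hvtop : Tendsto v atTop atTop)
    (hconv : ∀ T > 0, ∀ ε > 0, ∃ M : ℕ, ∀ m ≥ M, ∀ t ∈ Set.Icc (0:ℝ) T,
      ‖q (v m + t) - qe t‖ ≤ ε)
    (hgap : Tendsto (fun m => v (m + 1) - v m) atTop (nhds τ)) :
    Tendsto (fun t => (1 / t) * ∫ u in (0:ℝ)..t, ψ (q u))
      atTop (nhds ((1 / τ) * ∫ u in (0:ℝ)..τ, ψ (qe u))) :=
  stmt13_general K τ hτ qe q ψ hqe_cont hq_cont hψ_cont hψ_nonneg v hvmono hvtop hconv hgap
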